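/- Let B be a finite set of Boolean functions such that the clone [B] generated by B contains the clone N generated by {¬, 0, 1} (equivalently, [B] contains negation and both constant functions). Then there exists a propositional B-formula f(x) in one variable x that represents the negation function ¬x and in which the variable x occurs exactly once. -/
import Mathlib


/-- A Boolean function of some arity `n` (arity 0 gives the constant functions). -/
abbrev BFun : Type := Σ n : ℕ, (Fin n → Bool) → Bool

/-- A clone: a set of Boolean functions containing all projections and closed
under composition (superposition). -/
def IsClone (C : Set BFun) : Prop :=
  (∀ (n : ℕ) (k : Fin n), (⟨n, fun b => b k⟩ : BFun) ∈ C) ∧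
  (∀ f ∈ C, ∀ (m : ℕ) (g : Fin (Sigma.fst f) → ((Fin m → Bool) → Bool)),
    (∀ k, (⟨m, g k⟩ : BFun) ∈ C) →
    (⟨m, fun b => f.2 fun k => g k b⟩ : BFun) ∈ C)

/-- `cloneGen B` = `[B]`, the smallest clone containing `B`. -/
def cloneGen (B : Set BFun) : Set BFun := ⋂₀ {C | IsClone C ∧ B ⊆ C}

/-- Propositional formulas over variables `V` with arbitrary Boolean connectives. -/
inductive PForm (V : Type) : Type
  | var : V → PForm V
  | app : (n : ℕ) → ((Fin n → Bool) → Bool) → (Fin n → PForm V) → PForm V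

/-- Evaluation under an assignment `σ`: the Boolean function represented by the formula. -/
def PForm.eval {V : Type} (σ : V → Bool) : PForm V → Bool
  | PForm.var x => σ x
  | PForm.app _ f args => f fun k => PForm.eval σ (args k)

/-- All connectives occurring in the formula come from `B` (a `B`-formula). -/
def PForm.usesFuns {V : Type} (B : Set BFun) : PForm V → Prop
  | PForm.var _ => True
  | PForm.app n f args => (⟨n, f⟩ : BFun) ∈ B ∧ ∀ k, PForm.usesFuns B (args k)

/-- Number of (syntactic) occurrences of the variable `x` in the formula. -/
def PForm.occ {V : Type} [DecidableEq V] (x : V) : PForm V → ℕ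
  | PForm.var y => if y = x then 1 else 0
  | PForm.app _ _ args => ∑ k, PForm.occ x (args k)

/-- The unary Boolean negation function. -/
def notFun : BFun := ⟨1, fun b => ! b 0⟩

/-- The 0-ary constant Boolean function with value `c`. -/
def constFun (c : Bool) : BFun := ⟨0, fun _ => c⟩

/-- The binary Boolean OR function. -/
def orFun : BFun := ⟨2, fun b => b 0 || b 1⟩

/-- The binary Boolean AND function. -/
def andFun : BFun := ⟨2, fun b => b 0 && b 1⟩

/-- The clone M of all monotone Boolean functions. -/
def monotoneFuns : Set BFun :=
  {f : BFun | ∀ a b : Fin f.1 → Bool, (∀ k, a k ≤ b k) → f.2 a ≤ f.2 b}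

namespace PForm

/-- Simultaneous substitution of formulas for variables. -/
def subst {V W : Type} (θ : V → PForm W) : PForm V → PForm W
  | var v => θ v
  | app n f args => app n f fun k => subst θ (args k)

lemma eval_subst {V W : Type} (θ : V → PForm W) (σ : W → Bool) :
    ∀ φ : PForm V, (φ.subst θ).eval σ = φ.eval fun v => (θ v).eval σ
  | var v => rfl
  | app n f args => by
    simp only [subst, eval]
    congr 1
    funext k
    exact eval_subst θ σ (args k)

lemma usesFuns_subst {V W : Type} {B : Set BFun} {θ : V → PForm W}
    (hθ : ∀ v, (θ v).usesFuns B) :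
    ∀ φ : PForm V, φ.usesFuns B → (φ.subst θ).usesFuns B
  | var _, _ => hθ _
  | app n f args, h => ⟨h.1, fun k => usesFuns_subst hθ (args k) (h.2 k)⟩

lemma occ_subst_zero {V W : Type} [DecidableEq W] {θ : V → PForm W} {x : W}
    (hθ : ∀ v, (θ v).occ x = 0) :
    ∀ φ : PForm V, (φ.subst θ).occ x = 0
  | var v => hθ v
  | app n f args => by
    simp only [subst, occ]
    exact Finset.sum_eq_zero fun k _ => occ_subst_zero hθ (args k)

end PForm

/-- Functions representable by a `B`-formula. -/
def RepSet (B : Set BFun) : Set BFun :=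
  {f | ∃ φ : PForm (Fin f.1), φ.usesFuns B ∧ ∀ σ, φ.eval σ = f.2 σ}

lemma isClone_Rep (B : Set BFun) : IsClone (RepSet B) := by
  constructor
  · intro n k
    exact ⟨PForm.var k, trivial, fun σ => rfl⟩
  · rintro f ⟨φf, hfu, hfe⟩ m g hg
    choose φg hgu hge using hg
    refine ⟨φf.subst φg, PForm.usesFuns_subst hgu φf hfu, fun σ => ?_⟩
    rw [PForm.eval_subst]
    have h1 : (fun v => (φg v).eval σ) = fun k => g k σ := funext fun k => hge k σ
    rw [h1, hfe]

lemma subset_Rep (B : Set BFun) : B ⊆ RepSet B := by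
  rintro ⟨n, f⟩ hf
  exact ⟨PForm.app n f (fun k => PForm.var k), ⟨hf, fun k => trivial⟩, fun σ => rfl⟩

lemma cloneGen_subset_Rep (B : Set BFun) : cloneGen B ⊆ RepSet B :=
  fun _ hx => hx (RepSet B) ⟨isClone_Rep B, subset_Rep B⟩

lemma mem_cloneGen_of_mem {B : Set BFun} {f : BFun} (hf : f ∈ B) : f ∈ cloneGen B :=
  fun _ hC => hC.2 hf

lemma flip_exists (g : ℕ → Bool) (n : ℕ) (h0 : g 0 = true) (hn : g n = false) :
    ∃ i < n, g i = true ∧ g (i + 1) = false := by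
  induction n with
  | zero => rw [h0] at hn; exact absurd hn (by simp)
  | succ n ih =>
    cases hgn : g n with
    | false =>
      obtain ⟨i, hi, h⟩ := ih hgn
      exact ⟨i, Nat.lt_succ_of_lt hi, h⟩
    | true => exact ⟨n, Nat.lt_succ_self n, hgn, hn⟩

/-- Key lemma: from any B-formula computing negation, together with closed B-formulas
for the constants, one extracts a B-formula for negation with a single occurrence
of the variable. -/
lemma lemL (B : Set BFun)
    (κ : Bool → PForm Unit) (hκu : ∀ c, (κ c).usesFuns B)
    (hκe : ∀ c σ, (κ c).eval σ = c) (hκo : ∀ c, (κ c).occ () = 0) :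
    ∀ φ : PForm Unit, φ.usesFuns B → (∀ σ, φ.eval σ = ! σ ()) →
      ∃ ψ : PForm Unit, ψ.usesFuns B ∧ (∀ σ : Unit → Bool, ψ.eval σ = ! σ ()) ∧
        ψ.occ () = 1 := by
  intro φ
  induction φ with
  | var v =>
    intro _ h
    have := h (fun _ => false)
    simp [PForm.eval] at this
  | app n f args ih =>
    intro hu he
    -- the unary functions computed by the children
    set a : Fin n → Bool → Bool := fun k b => (args k).eval (fun _ => b) with ha
    set g : ℕ → Bool := fun i => f (fun k => if (k : ℕ) < i then a k true else a k false)
      with hgdef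
    have hg0 : g 0 = true := by
      have h := he (fun _ => false)
      simpa [hgdef, PForm.eval, ha] using h
    have hgn : g n = false := by
      have h := he (fun _ => true)
      simp only [hgdef]
      have harg : (fun k : Fin n => if (k : ℕ) < n then a k true else a k false)
          = fun k => a k true := by
        funext k; simp [k.isLt]
      rw [harg]
      simpa [PForm.eval, ha] using h
    obtain ⟨i, hi, hgi, hgi1⟩ := flip_exists g n hg0 hgn
    set kk : Fin n := ⟨i, hi⟩ with hkk
    set c : Fin n → Bool := fun k => if (k : ℕ) < i then a k true else a k false with hc
    have hck : c kk = a kk false := by simp [hc, hkk]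
    have hfc : f c = true := hgi
    have hval0 : f (Function.update c kk (a kk false)) = true := by
      rw [← hck, Function.update_eq_self]; exact hfc
    have hval1 : f (Function.update c kk (a kk true)) = false := by
      have hup : Function.update c kk (a kk true)
          = fun k : Fin n => if (k : ℕ) < i + 1 then a k true else a k false := by
        funext k
        by_cases hk : k = kk
        · subst hk
          simp [Function.update_self, hkk]
        · rw [Function.update_of_ne hk]
          have hne : (k : ℕ) ≠ i := fun h => hk (Fin.ext h)
          by_cases hlt : (k : ℕ) < i
          · simp [hc, hlt, Nat.lt_succ_of_lt hlt]
          · have h2 : ¬ (k : ℕ) < i + 1 := by omega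
            simp [hc, hlt, h2]
      rw [hup]; exact hgi1
    have hane : a kk false ≠ a kk true := by
      intro hEq
      rw [← hEq, hval0] at hval1
      exact absurd hval1 (by simp)
    have hargev : ∀ (k : Fin n) (σ : Unit → Bool), (args k).eval σ = a k (σ ()) := by
      intro k σ
      have hσ : (fun _ : Unit => σ ()) = σ := funext fun u => rfl
      simp only [ha]
    obtain ⟨ξ, hξu, hξo, hξe⟩ :
        ∃ ξ : PForm Unit, ξ.usesFuns B ∧ ξ.occ () = 1 ∧
          ∀ σ : Unit → Bool, f (Function.update c kk (ξ.eval σ)) = ! σ () := by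
      cases hb : a kk false with
      | false =>
        have hbt : a kk true = true := by
          cases h : a kk true
          · exact absurd (hb.trans h.symm) hane
          · rfl
        have h0 := hval0; rw [hb] at h0
        have h1 := hval1; rw [hbt] at h1
        refine ⟨PForm.var (), trivial, by simp [PForm.occ], fun σ => ?_⟩
        cases hσ : σ () with
        | false => simp [PForm.eval, hσ, h0]
        | true => simp [PForm.eval, hσ, h1]
      | true =>
        have hbt : a kk true = false := by
          cases h : a kk true
          · rfl
          · exact absurd (hb.trans h.symm) hane
        have hknot : ∀ σ : Unit → Bool, (args kk).eval σ = ! σ () := by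
          intro σ
          rw [hargev kk σ]
          cases hσ : σ () with
          | false => rw [hb]; rfl
          | true => rw [hbt]; rfl
        have h0 := hval0; rw [hb] at h0
        have h1 := hval1; rw [hbt] at h1
        obtain ⟨ψ', hψu, hψe, hψo⟩ := ih kk (hu.2 kk) hknot
        refine ⟨ψ', hψu, hψo, fun σ => ?_⟩
        rw [hψe σ]
        cases hσ : σ () with
        | false => simp [hσ, h0]
        | true => simp [hσ, h1]
    refine ⟨PForm.app n f (fun k => if k = kk then ξ else κ (c k)), ⟨hu.1, ?_⟩, ?_, ?_⟩
    · intro k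
      by_cases h : k = kk
      · simp [h, hξu]
      · simp [h, hκu]
    · intro σ
      simp only [PForm.eval]
      have h1 : (fun k => PForm.eval σ (if k = kk then ξ else κ (c k)))
          = Function.update c kk (ξ.eval σ) := by
        funext k
        by_cases h : k = kk
        · subst h; simp [Function.update_self]
        · simp [h, Function.update_of_ne h, hκe]
      rw [h1]
      exact hξe σ
    · simp only [PForm.occ]
      rw [Finset.sum_eq_single_of_mem kk (Finset.mem_univ kk)
        (fun b _ hb => by simp [hb, hκo])]
      simp [hξo]

/-- If `B` is a finite set of Boolean functions whose generated clone
`[B]` contains the clone N = [{¬, 0, 1}], then there is a propositional `B`-formula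
in the single variable `x` (here `V = Unit`) representing `¬x` in which `x` occurs
exactly once. -/
theorem stmt17 (B : Set BFun) (hfin : B.Finite)
    (hN : cloneGen {notFun, constFun false, constFun true} ⊆ cloneGen B) :
    ∃ φ : PForm Unit, PForm.usesFuns B φ ∧
      (∀ σ : Unit → Bool, PForm.eval σ φ = ! σ ()) ∧
      PForm.occ () φ = 1 := by
  have hnot : notFun ∈ RepSet B :=
    cloneGen_subset_Rep B (hN (mem_cloneGen_of_mem (by simp)))
  have hconst : ∀ c : Bool, constFun c ∈ RepSet B := by
    intro c
    exact cloneGen_subset_Rep B (hN (mem_cloneGen_of_mem (by cases c <;> simp)))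
  have hκ : ∀ c : Bool, ∃ κ : PForm Unit,
      κ.usesFuns B ∧ (∀ σ, κ.eval σ = c) ∧ κ.occ () = 0 := by
    intro c
    obtain ⟨κ0, hu, hev⟩ := hconst c
    refine ⟨κ0.subst (fun v => v.elim0),
      PForm.usesFuns_subst (fun v => v.elim0) κ0 hu, fun σ => ?_,
      PForm.occ_subst_zero (fun v => v.elim0) κ0⟩
    rw [PForm.eval_subst]
    exact hev _
  choose κ hκu hκe hκo using hκ
  obtain ⟨φ1, hu1, he1⟩ := hnot
  have hφ : ∀ σ : Unit → Bool, (φ1.subst fun _ => PForm.var ()).eval σ = ! σ () := by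
    intro σ
    rw [PForm.eval_subst]
    exact he1 fun _ => σ ()
  refine lemL B κ hκu hκe hκo (φ1.subst fun _ => PForm.var ()) ?_ hφ
  exact PForm.usesFuns_subst (B := B) (θ := fun _ => PForm.var ()) (fun _ => trivial) φ1 hu1
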